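/- arXiv:2002.07153 — 3 statements merged into one kernel-verified Lean document; each statement's English description precedes it below -/
import Mathlib

section
/- Let F and F' be deterministic p-filters with F single-outputting, such that F' output simulates F. Then the induced clique cover Q(F,F') on the compatibility graph of F satisfies every zipper constraint in Zip(F). -/
/-- A procrustean filter (p-filter): states `V`, a nonempty set of initial
states, observations `Y`, a transition function `tr : V → V → Set Y`,
an output space `C`, and an output function `out : V → Set C` mapping each
state to a nonempty set of outputs. -/
structure PFilter (V Y C : Type) where
  init : Set V
  init_nonempty : init.Nonempty
  tr : V → V → Set Y
  out : V → Set C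
  out_nonempty : ∀ v, (out v).Nonempty

namespace PFilter

variable {V V' Y C : Type}

/-- `F.Reaches v s u` : the observation string `s` reaches state `u` from `v`. -/
inductive Reaches (F : PFilter V Y C) : V → List Y → V → Prop
  | nil (v : V) : Reaches F v [] v
  | cons {v w u : V} {y : Y} {s : List Y} :
      y ∈ F.tr v w → Reaches F w s u → Reaches F v (y :: s) u

/-- The set of states reached by `s` when traced from state `v`. -/
def reachedFrom (F : PFilter V Y C) (v : V) (s : List Y) : Set V :=
  {u | F.Reaches v s u}

/-- The set of states reached by `s` from some initial state. -/
def reached (F : PFilter V Y C) (s : List Y) : Set V :=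
  {u | ∃ v0 ∈ F.init, F.Reaches v0 s u}

/-- The extensions of a state `v`: strings that do not crash from `v`. -/
def extensions (F : PFilter V Y C) (v : V) : Set (List Y) :=
  {s | ∃ u, F.Reaches v s u}

/-- The interaction language of `F`: extensions of initial states. -/
def language (F : PFilter V Y C) : Set (List Y) :=
  {s | ∃ v0 ∈ F.init, ∃ u, F.Reaches v0 s u}

/-- The filter output for string `s`: union of outputs of states reached by `s`. -/
def outputs (F : PFilter V Y C) (s : List Y) : Set C :=
  ⋃ v ∈ F.reached s, F.out v

/-- `F'` output simulates `F`. -/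
def OutputSimulates (F' : PFilter V' Y C) (F : PFilter V Y C) : Prop :=
  ∀ s ∈ F.language, (F'.outputs s).Nonempty ∧ F'.outputs s ⊆ F.outputs s

/-- `F` is deterministic: one initial state, and outgoing transition labels
from any state are pairwise disjoint. -/
def Deterministic (F : PFilter V Y C) : Prop :=
  (∃ v0, F.init = {v0}) ∧
    ∀ v1 v2 v3 : V, v2 ≠ v3 → F.tr v1 v2 ∩ F.tr v1 v3 = ∅

/-- `F` is single-outputting: every state's output set is a singleton. -/
def SingleOutputting (F : PFilter V Y C) : Prop :=
  ∀ v, ∃ o, F.out v = {o}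

/-- Two states are compatible: they agree on the outputs of all common extensions. -/
def Compatible (F : PFilter V Y C) (v w : V) : Prop :=
  ∀ s ∈ F.extensions v ∩ F.extensions w,
    ∀ v' ∈ F.reachedFrom v s, ∀ w' ∈ F.reachedFrom w s, F.out v' = F.out w'

/-- A set of mutually compatible states (a clique in the compatibility graph). -/
def MutuallyCompatible (F : PFilter V Y C) (U : Set V) : Prop :=
  ∀ v ∈ U, ∀ w ∈ U, F.Compatible v w

/-- A set of states is group compatible: there is a common output on
all their extensions. -/
def GroupCompatible (F : PFilter V Y C) (U : Set V) : Prop :=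
  ∀ s : List Y, (∃ u ∈ U, s ∈ F.extensions u) →
    (⋂ w ∈ {w | ∃ u ∈ U, w ∈ F.reachedFrom u s}, F.out w).Nonempty

/-- A state `v` of `F` corresponds to a state `v'` of `F'` if some string
reaches both from the respective initial states. -/
def Corresponds (F : PFilter V Y C) (F' : PFilter V' Y C) (v : V) (v' : V') : Prop :=
  ∃ s : List Y, v ∈ F.reached s ∧ v' ∈ F'.reached s

/-- `K_{v'}` : the set of states of `F` corresponding to a state `v'` of `F'`. -/
def corrSet (F : PFilter V Y C) (F' : PFilter V' Y C) (v' : V') : Set V :=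
  {v | Corresponds F F' v v'}

/-- The induced cover `Q(F,F') = {K_{v'} : v' ∈ V(F')}`. -/
def inducedCover (F : PFilter V Y C) (F' : PFilter V' Y C) : Set (Set V) :=
  Set.range (corrSet F F')

/-- The relation induced on `V(F)` by an output-simulating filter `F'`. -/
def inducedRel (F : PFilter V Y C) (F' : PFilter V' Y C) (v w : V) : Prop :=
  ∃ v' : V', Corresponds F F' v v' ∧ Corresponds F F' w v'

/-- `(U,W)_y` is a zipper constraint: `U` and `W` are sets of mutually
compatible states and `W` is the set of `y`-successors of `U`. -/
def ZipperConstraint (F : PFilter V Y C) (U W : Set V) (y : Y) : Prop :=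
  F.MutuallyCompatible U ∧ F.MutuallyCompatible W ∧
    W = {w | ∃ u ∈ U, y ∈ F.tr u w}

/-- A collection of sets `K` satisfies the zipper constraints of `F`. -/
def SatisfiesZip (F : PFilter V Y C) (K : Set (Set V)) : Prop :=
  ∀ U W y, F.ZipperConstraint U W y → (∃ S ∈ K, U ⊆ S) → ∃ T ∈ K, W ⊆ T

/-- `K` is a clique cover of the compatibility graph of `F` covering all vertices. -/
def IsCliqueCover (F : PFilter V Y C) (K : Set (Set V)) : Prop :=
  (∀ S ∈ K, F.MutuallyCompatible S) ∧ ⋃₀ K = Set.univ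

/-- `(U,W)_y` is a generalized zipper constraint: `U` and `W` are group
compatible and `W` is the set of `y`-successors of `U`. -/
def GenZipperConstraint (F : PFilter V Y C) (U W : Set V) (y : Y) : Prop :=
  F.GroupCompatible U ∧ F.GroupCompatible W ∧
    W = {w | ∃ u ∈ U, y ∈ F.tr u w}

/-- A collection of sets `K` satisfies the generalized zipper constraints of `F`. -/
def SatisfiesGenZip (F : PFilter V Y C) (K : Set (Set V)) : Prop :=
  ∀ U W y, F.GenZipperConstraint U W y → (∃ S ∈ K, U ⊆ S) → ∃ T ∈ K, W ⊆ T

/-- `K` is a cover of `V(F)` by group-compatible sets. -/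
def IsGroupCover (F : PFilter V Y C) (K : Set (Set V)) : Prop :=
  (∀ S ∈ K, F.GroupCompatible S) ∧ ⋃₀ K = Set.univ

/-- `F'` is an induced filter `M(F,K)`: one state per set of `K`; a state is
initial iff its set contains an initial state; output is the intersection of
the outputs over its set; transitions are inherited, and for each state and
observation only a single edge is kept, going to a set that contains all
successors under that observation. -/
def IsInducedFilter (F : PFilter V Y C) (K : Set (Set V))
    (F' : PFilter {S // S ∈ K} Y C) : Prop :=
  F'.init = {S : {S // S ∈ K} | ∃ v ∈ F.init, v ∈ S.1} ∧
  (∀ S, F'.out S = ⋂ v ∈ S.1, F.out v) ∧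
  (∀ S T (y : Y), y ∈ F'.tr S T → ∃ v ∈ S.1, ∃ w ∈ T.1, y ∈ F.tr v w) ∧
  (∀ S T (y : Y), y ∈ F'.tr S T → ∀ w, (∃ v ∈ S.1, y ∈ F.tr v w) → w ∈ T.1) ∧
  (∀ S (y : Y), (∃ v ∈ S.1, ∃ w, y ∈ F.tr v w) → ∃! T, y ∈ F'.tr S T)

/-- `F'` is the merged filter of `F` under cover `K` *without* the pruning
step: initial states are sets containing an initial state, outputs are the
common outputs of each set, and transitions are fully inherited. -/
def IsMergedFilter (F : PFilter V Y C) (K : Set (Set V))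
    (F' : PFilter {S // S ∈ K} Y C) : Prop :=
  F'.init = {S : {S // S ∈ K} | ∃ v ∈ F.init, v ∈ S.1} ∧
  (∀ S, F'.out S = ⋂ v ∈ S.1, F.out v) ∧
  (∀ S T, F'.tr S T = ⋃ v ∈ S.1, ⋃ w ∈ T.1, F.tr v w)

end PFilter

/-!
If `u ∈ K_{v'}` is witnessed by a string `s` and `y` leads from `u` to `w`, then `s y` lies in
the language of `F`; since `F'` output simulates `F`, the string `s y` does not crash in `F'`, and
by determinism of `F'` it must go through `v'` and leave it along the unique `y`-edge `v' → w'`.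
So every `y`-successor of a subset of `K_{v'}` lies in the same `K_{w'}`.
-/

namespace PFilter

variable {V V' Y C : Type}

theorem reaches_append_singleton {F : PFilter V Y C} {v u : V} {y : Y} {s : List Y} :
    F.Reaches v (s ++ [y]) u ↔ ∃ m, F.Reaches v s m ∧ y ∈ F.tr m u := by
  induction s generalizing v with
  | nil =>
    constructor
    · rintro (_ | ⟨hy, (_ | _)⟩)
      exact ⟨v, .nil v, hy⟩
    · rintro ⟨m, (_ | _), hy⟩
      exact .cons hy (.nil u)
  | cons a t ih =>
    constructor
    · rintro (_ | ⟨ha, hrest⟩)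
      obtain ⟨m, hm, hy⟩ := ih.mp hrest
      exact ⟨m, .cons ha hm, hy⟩
    · rintro ⟨m, (_ | ⟨ha, hrest⟩), hy⟩
      exact .cons ha (ih.mpr ⟨m, hrest, hy⟩)

theorem mem_reached_append_singleton {F : PFilter V Y C} {u : V} {y : Y} {s : List Y} :
    u ∈ F.reached (s ++ [y]) ↔ ∃ m ∈ F.reached s, y ∈ F.tr m u := by
  simp only [reached, Set.mem_ofPred_eq, reaches_append_singleton]
  grind

theorem mem_language_iff {F : PFilter V Y C} {s : List Y} :
    s ∈ F.language ↔ (F.reached s).Nonempty := by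
  simp only [language, reached, Set.Nonempty, Set.mem_ofPred_eq]
  grind

theorem OutputSimulates.language_subset {F : PFilter V Y C} {F' : PFilter V' Y C}
    (hsim : F'.OutputSimulates F) : F.language ⊆ F'.language := fun s hs => by
  obtain ⟨c, hc⟩ := (hsim s hs).1
  simp only [outputs, Set.mem_iUnion] at hc
  obtain ⟨v', hv', -⟩ := hc
  exact mem_language_iff.mpr ⟨v', hv'⟩

namespace Deterministic

variable {F : PFilter V Y C} (hdet : F.Deterministic)
include hdet

theorem tr_unique {v w w' : V} {y : Y} (h : y ∈ F.tr v w) (h' : y ∈ F.tr v w') : w = w' := by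
  by_contra hne
  simpa [hdet.2 v w w' hne] using Set.mem_inter h h'

theorem reaches_unique {v u u' : V} {s : List Y} (h : F.Reaches v s u)
    (h' : F.Reaches v s u') : u = u' := by
  induction h with
  | nil => cases h'; rfl
  | cons hy _ ih =>
    obtain _ | ⟨hy', hrest⟩ := h'
    obtain rfl := hdet.tr_unique hy hy'
    exact ih hrest

theorem reached_subsingleton (s : List Y) : (F.reached s).Subsingleton := by
  rintro u ⟨v, hv, hu⟩ u' ⟨v', hv', hu'⟩
  obtain ⟨v0, hinit⟩ := hdet.1
  rw [hinit] at hv hv'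
  subst hv hv'
  exact hdet.reaches_unique hu hu'

end Deterministic

theorem Corresponds.exists_tr {F : PFilter V Y C} {F' : PFilter V' Y C}
    (hdet' : F'.Deterministic) (hsim : F'.OutputSimulates F) {u w : V} {v' : V'} {y : Y}
    (h : Corresponds F F' u v') (hy : y ∈ F.tr u w) :
    ∃ w', y ∈ F'.tr v' w' ∧ Corresponds F F' w w' := by
  obtain ⟨s, hu, hv'⟩ := h
  have hw : w ∈ F.reached (s ++ [y]) := mem_reached_append_singleton.mpr ⟨u, hu, hy⟩
  obtain ⟨w', hw'⟩ := mem_language_iff.mp (hsim.language_subset (mem_language_iff.mpr ⟨w, hw⟩))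
  obtain ⟨m, hm, hy'⟩ := mem_reached_append_singleton.mp hw'
  obtain rfl := hdet'.reached_subsingleton s hm hv'
  exact ⟨w', hy', s ++ [y], hw, hw'⟩

end PFilter

theorem inducedCover_satisfiesZip_general {V V' Y C : Type}
    (F : PFilter V Y C) (F' : PFilter V' Y C)
    (hdet' : F'.Deterministic)
    (hsim : F'.OutputSimulates F) :
    PFilter.SatisfiesZip F (PFilter.inducedCover F F') := by
  rintro U W y ⟨-, -, rfl⟩ ⟨_, ⟨v', rfl⟩, hU⟩
  obtain hW | ⟨w₀, u₀, hu₀, hy₀⟩ := Set.eq_empty_or_nonempty {w | ∃ u ∈ U, y ∈ F.tr u w}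
  · exact ⟨PFilter.corrSet F F' v', ⟨v', rfl⟩, hW ▸ Set.empty_subset _⟩
  obtain ⟨w₀', hy₀', -⟩ := (hU hu₀).exists_tr hdet' hsim hy₀
  refine ⟨PFilter.corrSet F F' w₀', ⟨w₀', rfl⟩, ?_⟩
  rintro w ⟨u, hu, hy⟩
  obtain ⟨w', hy', hw⟩ := (hU hu).exists_tr hdet' hsim hy
  rwa [hdet'.tr_unique hy' hy₀'] at hw

/-- The induced clique cover `Q(F,F')` of an output-simulating
deterministic filter satisfies all zipper constraints of `F`. -/
theorem inducedCover_satisfiesZip {V V' Y C : Type} [Finite V] [Finite V']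
    (F : PFilter V Y C) (F' : PFilter V' Y C)
    (hdet : F.Deterministic) (hdet' : F'.Deterministic)
    (hso : F.SingleOutputting) (hsim : F'.OutputSimulates F) :
    PFilter.SatisfiesZip F (PFilter.inducedCover F F') :=
  inducedCover_satisfiesZip_general F F' hdet' hsim
end

section
/- Let F be a deterministic single-outputting p-filter in which every state is reachable from the initial state, and let F* be a deterministic p-filter that output simulates F and has the minimum number of states among all such filters. Then the induced clique cover Q(F,F*) is a clique cover of the compatibility graph G(F) that covers all vertices, satisfies Zip(F), and has minimum cardinality among all clique covers of G(F) that cover all vertices and satisfy Zip(F). -/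
/-!
States of `F` corresponding to one state `v'` of `F*` are compatible: along a common
continuation `F*`, being deterministic, moves from `v'` to a single state, and its output lies
in the singleton outputs of both endpoints in `F`. Determinism of `F*` also sends the
`y`-successors of a clique `K_{v'}` into `K_{q}` for the unique `y`-successor `q` of `v'`,
which gives the zipper constraints. Conversely, a clique cover satisfying the zipper constraints
lets every clique pick one clique containing all its `y`-successors; running these choices
as a deterministic filter output simulates `F`, so minimality of `F*` bounds the size of
`Q(F, F*)` by that of the cover.
-/

namespace PFilter

variable {V V' W Y C : Type} {F : PFilter V Y C} {F' : PFilter V' Y C}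

theorem Reaches.append {v u q : V} {s t : List Y} (h₁ : F.Reaches v s u) (h₂ : F.Reaches u t q) :
    F.Reaches v (s ++ t) q := by
  induction h₁ with
  | nil => exact h₂
  | cons hy _ ih => exact .cons hy (ih h₂)

theorem Reaches.exists_of_append {v q : V} {s t : List Y} (h : F.Reaches v (s ++ t) q) :
    ∃ m, F.Reaches v s m ∧ F.Reaches m t q := by
  induction s generalizing v with
  | nil => exact ⟨v, .nil v, h⟩
  | cons y s ih =>
    obtain _ | ⟨hy, hr⟩ := h
    obtain ⟨m, hm₁, hm₂⟩ := ih hr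
    exact ⟨m, .cons hy hm₁, hm₂⟩

theorem reaches_singleton_iff {v u : V} {y : Y} : F.Reaches v [y] u ↔ y ∈ F.tr v u := by
  refine ⟨?_, fun hy => .cons hy (.nil u)⟩
  rintro (_ | ⟨hy, _ | _⟩)
  exact hy

theorem reached_append {v u : V} {t s : List Y} (hv : v ∈ F.reached t) (h : F.Reaches v s u) :
    u ∈ F.reached (t ++ s) :=
  let ⟨v₀, hv₀, hr⟩ := hv
  ⟨v₀, hv₀, hr.append h⟩

theorem mem_language_of_mem_reached {u : V} {s : List Y} (h : u ∈ F.reached s) :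
    s ∈ F.language :=
  let ⟨v₀, hv₀, hr⟩ := h
  ⟨v₀, hv₀, u, hr⟩

theorem Deterministic.reaches_unique_s10 (hdet : F.Deterministic) {v u₁ u₂ : V} {s : List Y}
    (h₁ : F.Reaches v s u₁) (h₂ : F.Reaches v s u₂) : u₁ = u₂ := by
  induction h₁ generalizing u₂ with
  | nil => cases h₂; rfl
  | @cons v w u y s hy _ ih =>
    obtain _ | @⟨_, w₂, _, _, _, hy₂, hr₂⟩ := h₂
    obtain rfl : w = w₂ := by
      by_contra hne
      exact (hdet.2 v w w₂ hne).subset ⟨hy, hy₂⟩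
    exact ih hr₂

theorem Deterministic.reached_subsingleton_s10 (hdet : F.Deterministic) (s : List Y) :
    (F.reached s).Subsingleton := by
  obtain ⟨v₀, hv₀⟩ := hdet.1
  rintro a ⟨_, ha₀, ha⟩ b ⟨_, hb₀, hb⟩
  rw [hv₀] at ha₀ hb₀
  subst ha₀ hb₀
  exact hdet.reaches_unique_s10 ha hb

theorem Deterministic.reaches_of_mem_reached_append (hdet : F.Deterministic) {m q : V}
    {t s : List Y} (hq : q ∈ F.reached (t ++ s)) (hm : m ∈ F.reached t) : F.Reaches m s q := by
  obtain ⟨v₀, hv₀, hr⟩ := hq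
  obtain ⟨m', hm', hm's⟩ := hr.exists_of_append
  rwa [hdet.reached_subsingleton_s10 t ⟨v₀, hv₀, hm'⟩ hm] at hm's

theorem Deterministic.outputs_eq (hdet : F.Deterministic) {u : V} {s : List Y}
    (hu : u ∈ F.reached s) : F.outputs s = F.out u := by
  refine subset_antisymm ?_ (Set.subset_biUnion_of_mem hu)
  simp only [outputs, Set.iUnion_subset_iff]
  intro v hv
  rw [hdet.reached_subsingleton_s10 s hv hu]

theorem OutputSimulates.reached_nonempty (hsim : F'.OutputSimulates F) {s : List Y}
    (hs : s ∈ F.language) : (F'.reached s).Nonempty := by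
  obtain ⟨c, hc⟩ := (hsim s hs).1
  simp only [outputs, Set.mem_iUnion] at hc
  obtain ⟨v', hv', -⟩ := hc
  exact ⟨v', hv'⟩

theorem OutputSimulates.out_subset (hsim : F'.OutputSimulates F) (hdet : F.Deterministic)
    {u : V} {q : V'} {s : List Y} (hu : u ∈ F.reached s) (hq : q ∈ F'.reached s) :
    F'.out q ⊆ F.out u :=
  calc F'.out q ⊆ F'.outputs s := Set.subset_biUnion_of_mem hq
    _ ⊆ F.outputs s := (hsim s (mem_language_of_mem_reached hu)).2
    _ = F.out u := hdet.outputs_eq hu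

theorem OutputSimulates.exists_tr_of_corresponds (hsim : F'.OutputSimulates F)
    (hdet' : F'.Deterministic) {u w : V} {v' : V'} {y : Y} (h : Corresponds F F' u v')
    (hy : y ∈ F.tr u w) : ∃ q, y ∈ F'.tr v' q := by
  obtain ⟨s, hu, hv'⟩ := h
  have hw : w ∈ F.reached (s ++ [y]) := reached_append hu (reaches_singleton_iff.2 hy)
  obtain ⟨q, hq⟩ := hsim.reached_nonempty (mem_language_of_mem_reached hw)
  exact ⟨q, reaches_singleton_iff.1 (hdet'.reaches_of_mem_reached_append hq hv')⟩

theorem Corresponds.step {u w : V} {v' q : V'} {y : Y} (h : Corresponds F F' u v')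
    (hy : y ∈ F.tr u w) (hy' : y ∈ F'.tr v' q) : Corresponds F F' w q :=
  let ⟨s, hu, hv'⟩ := h
  ⟨s ++ [y], reached_append hu (reaches_singleton_iff.2 hy),
    reached_append hv' (reaches_singleton_iff.2 hy')⟩

theorem compatible_of_corresponds (hdet : F.Deterministic) (hso : F.SingleOutputting)
    (hdet' : F'.Deterministic) (hsim : F'.OutputSimulates F) {v w : V} {v' : V'}
    (hv : Corresponds F F' v v') (hw : Corresponds F F' w v') : F.Compatible v w := by
  rintro s - v₁ hv₁ w₁ hw₁
  obtain ⟨t₁, hvt, hv't₁⟩ := hv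
  obtain ⟨t₂, hwt, hv't₂⟩ := hw
  have hv₁r : v₁ ∈ F.reached (t₁ ++ s) := reached_append hvt hv₁
  have hw₁r : w₁ ∈ F.reached (t₂ ++ s) := reached_append hwt hw₁
  obtain ⟨q, hq⟩ := hsim.reached_nonempty (mem_language_of_mem_reached hv₁r)
  have hq₂ : q ∈ F'.reached (t₂ ++ s) :=
    reached_append hv't₂ (hdet'.reaches_of_mem_reached_append hq hv't₁)
  obtain ⟨c, hc⟩ := F'.out_nonempty q
  obtain ⟨o₁, ho₁⟩ := hso v₁
  obtain ⟨o₂, ho₂⟩ := hso w₁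
  have hc₁ : c ∈ F.out v₁ := hsim.out_subset hdet hv₁r hq hc
  have hc₂ : c ∈ F.out w₁ := hsim.out_subset hdet hw₁r hq₂ hc
  rw [ho₁, Set.mem_singleton_iff] at hc₁
  rw [ho₂, Set.mem_singleton_iff] at hc₂
  rw [ho₁, ho₂, ← hc₁, ← hc₂]

theorem isCliqueCover_inducedCover (hdet : F.Deterministic) (hso : F.SingleOutputting)
    (hreach : ∀ v : V, ∃ s : List Y, v ∈ F.reached s) (hdet' : F'.Deterministic)
    (hsim : F'.OutputSimulates F) : F.IsCliqueCover (inducedCover F F') := by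
  refine ⟨?_, Set.eq_univ_of_forall fun v => ?_⟩
  · rintro _ ⟨v', rfl⟩ v hv w hw
    exact compatible_of_corresponds hdet hso hdet' hsim hv hw
  · obtain ⟨s, hv⟩ := hreach v
    obtain ⟨v', hv'⟩ := hsim.reached_nonempty (mem_language_of_mem_reached hv)
    exact ⟨corrSet F F' v', ⟨v', rfl⟩, s, hv, hv'⟩

theorem satisfiesZip_inducedCover (hdet' : F'.Deterministic) (hsim : F'.OutputSimulates F) :
    F.SatisfiesZip (inducedCover F F') := by
  rintro U W y ⟨-, -, rfl⟩ ⟨_, ⟨v', rfl⟩, hU⟩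
  by_cases h : ∃ u ∈ U, ∃ w, y ∈ F.tr u w
  · obtain ⟨u, hu, w, hy⟩ := h
    obtain ⟨q, hq⟩ := hsim.exists_tr_of_corresponds hdet' (hU hu) hy
    exact ⟨corrSet F F' q, ⟨q, rfl⟩, fun w ⟨u, hu, hy⟩ => Corresponds.step (hU hu) hy hq⟩
  · push Not at h
    exact ⟨corrSet F F' v', ⟨v', rfl⟩, fun w ⟨u, hu, hy⟩ => absurd hy (h u hu w)⟩

theorem ncard_inducedCover_le [Finite V'] : (inducedCover F F').ncard ≤ Nat.card V' := by
  rw [← Nat.card_coe_set_eq]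
  exact Finite.card_range_le _

theorem MutuallyCompatible.out_eq {S : Set V} (hS : F.MutuallyCompatible S) {v w : V}
    (hv : v ∈ S) (hw : w ∈ S) : F.out v = F.out w :=
  hS v hv w hw [] ⟨⟨v, .nil v⟩, ⟨w, .nil w⟩⟩ v (.nil v) w (.nil w)

theorem MutuallyCompatible.succ {S : Set V} (hS : F.MutuallyCompatible S) (y : Y) :
    F.MutuallyCompatible {w | ∃ u ∈ S, y ∈ F.tr u w} := by
  rintro w₁ ⟨u₁, hu₁, hy₁⟩ w₂ ⟨u₂, hu₂, hy₂⟩ s ⟨⟨a, ha⟩, ⟨b, hb⟩⟩ p hp q hq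
  exact hS u₁ hu₁ u₂ hu₂ (y :: s) ⟨⟨a, .cons hy₁ ha⟩, ⟨b, .cons hy₂ hb⟩⟩
    p (.cons hy₁ hp) q (.cons hy₂ hq)

def ofNext (F : PFilter V Y C) (w₀ : W) (next : W → Y → W) (rep : W → V) : PFilter W Y C where
  init := {w₀}
  init_nonempty := Set.singleton_nonempty w₀
  tr w w' := {y | w' = next w y}
  out w := F.out (rep w)
  out_nonempty w := F.out_nonempty (rep w)

section ofNext

variable {w₀ : W} {next : W → Y → W} {rep : W → V}

theorem deterministic_ofNext : (F.ofNext w₀ next rep).Deterministic :=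
  ⟨⟨w₀, rfl⟩, fun _ _ _ hne =>
    Set.eq_empty_of_forall_notMem fun _ ⟨h₁, h₂⟩ => hne (h₁.trans h₂.symm)⟩

theorem reaches_ofNext_foldl (w : W) (s : List Y) :
    (F.ofNext w₀ next rep).Reaches w s (s.foldl next w) := by
  induction s generalizing w with
  | nil => exact .nil w
  | cons y s ih => exact .cons rfl (ih (next w y))

end ofNext

theorem Reaches.mem_foldl {σ : W → Set V} {next : W → Y → W}
    (hnext : ∀ w y, {u | ∃ v ∈ σ w, y ∈ F.tr v u} ⊆ σ (next w y)) {v u : V} {s : List Y}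
    (h : F.Reaches v s u) {w : W} (hv : v ∈ σ w) : u ∈ σ (s.foldl next w) := by
  induction h generalizing w with
  | nil => exact hv
  | cons hy _ ih => exact ih (hnext w _ ⟨_, hv, hy⟩)

theorem exists_deterministic_outputSimulates (hdet : F.Deterministic) {K : Set (Set V)}
    (hK : F.IsCliqueCover K) (hzip : F.SatisfiesZip K) :
    ∃ F'' : PFilter K Y C, F''.Deterministic ∧ F''.OutputSimulates F := by
  classical
  obtain ⟨v₀, hv₀⟩ := hdet.1
  obtain ⟨S₀, hS₀, hv₀S₀⟩ := Set.mem_sUnion.1 (hK.2 ▸ Set.mem_univ v₀)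
  have hsucc (S : K) (y : Y) : ∃ T : K, {w | ∃ u ∈ S.1, y ∈ F.tr u w} ⊆ T.1 := by
    obtain ⟨T, hT, hsub⟩ :=
      hzip _ _ y ⟨hK.1 S S.2, (hK.1 S S.2).succ y, rfl⟩ ⟨S, S.2, subset_rfl⟩
    exact ⟨⟨T, hT⟩, hsub⟩
  choose next hnext using hsucc
  let rep (S : K) : V := if h : S.1.Nonempty then h.some else v₀
  refine ⟨F.ofNext ⟨S₀, hS₀⟩ next rep, deterministic_ofNext, fun s hs => ?_⟩
  obtain ⟨i₀, hi₀, u, hu⟩ := hs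
  rw [hv₀, Set.mem_singleton_iff] at hi₀
  subst i₀
  rw [deterministic_ofNext.outputs_eq ⟨_, rfl, reaches_ofNext_foldl _ s⟩,
    hdet.outputs_eq ⟨v₀, hv₀ ▸ rfl, hu⟩]
  set T := s.foldl next ⟨S₀, hS₀⟩
  have huT : u ∈ T.1 := hu.mem_foldl (σ := Subtype.val) hnext hv₀S₀
  have hT : T.1.Nonempty := ⟨u, huT⟩
  have hrep : (F.ofNext ⟨S₀, hS₀⟩ next rep).out T = F.out u := by
    change F.out (rep T) = F.out u
    rw [show rep T = hT.some from dif_pos hT]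
    exact (hK.1 T T.2).out_eq hT.some_mem huT
  rw [hrep]
  exact ⟨F.out_nonempty u, subset_rfl⟩

end PFilter

/-- A minimal deterministic output-simulating filter induces a
minimum clique cover satisfying the zipper constraints. -/
theorem minimal_filter_induces_minimal_cover {V V' Y C : Type} [Finite V] [Finite V']
    (F : PFilter V Y C) (hdet : F.Deterministic) (hso : F.SingleOutputting)
    (hreach : ∀ v : V, ∃ s : List Y, v ∈ F.reached s)
    (Fstar : PFilter V' Y C) (hdstar : Fstar.Deterministic)
    (hsim : Fstar.OutputSimulates F)
    (hmin : ∀ (V'' : Type) (_ : Finite V'') (F'' : PFilter V'' Y C),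
      F''.Deterministic → F''.OutputSimulates F → Nat.card V' ≤ Nat.card V'') :
    PFilter.IsCliqueCover F (PFilter.inducedCover F Fstar) ∧
    PFilter.SatisfiesZip F (PFilter.inducedCover F Fstar) ∧
    ∀ K' : Set (Set V), PFilter.IsCliqueCover F K' → PFilter.SatisfiesZip F K' →
      (PFilter.inducedCover F Fstar).ncard ≤ K'.ncard := by
  refine ⟨PFilter.isCliqueCover_inducedCover hdet hso hreach hdstar hsim,
    PFilter.satisfiesZip_inducedCover hdstar hsim, fun K' hK' hzip => ?_⟩
  obtain ⟨F'', hdet'', hsim''⟩ := PFilter.exists_deterministic_outputSimulates hdet hK' hzip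
  calc (PFilter.inducedCover F Fstar).ncard ≤ Nat.card V' := PFilter.ncard_inducedCover_le
    _ ≤ Nat.card K' := hmin _ inferInstance F'' hdet'' hsim''
    _ = K'.ncard := Nat.card_coe_set_eq K'
end

section
/- Merging compatible states need not preserve determinism or output simulation: there exists a deterministic single-outputting p-filter F and a clique cover K of its compatibility graph covering all states such that the merged filter — whose states are the cliques of K, whose initial states are the cliques containing the initial state, whose outputs are the common outputs of each clique, and whose transitions are inherited as τ'(v',w') = ∪_{v ∈ K_{v'}, w ∈ K_{w'}} τ(v,w) — is non-deterministic and does not output simulate F. -/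
/-!
Take the deterministic filter with transitions `0 →₀ 2 →₁ 5`, `1 →₀ 3`, `4 →₁ 6`, initial
state `0`, and output `1` at state `6` only. The states `0, 1` are compatible (their common
extensions `[]` and `[0]` lead to states of output `0`), and so are `3, 4` (their only common
extension is `[]`). Merging the cliques `{0, 1}` and `{3, 4}` gives `{0, 1}` two distinct
`0`-successors `{2}` and `{3, 4}`, and it creates the run `{0, 1} →₀ {3, 4} →₁ {6}` on `[0, 1]`,
whose output `1` is not the output `0` of the state `5` reached by `[0, 1]` in the original filter.
-/

namespace PFilter

variable {V Y C : Type} {F : PFilter V Y C}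

theorem Compatible.symm {v w : V} (h : F.Compatible v w) : F.Compatible w v :=
  fun s hs w' hw' v' hv' => (h s hs.symm v' hv' w' hw').symm

theorem Compatible.out_eq {v w : V} (h : F.Compatible v w) : F.out v = F.out w :=
  h [] ⟨⟨v, .nil v⟩, ⟨w, .nil w⟩⟩ v (.nil v) w (.nil w)

/-- Coinduction principle for compatibility. -/
theorem compatible_of_forall_tr {v w : V} (hout : F.out v = F.out w)
    (hstep : ∀ y v' w', y ∈ F.tr v v' → y ∈ F.tr w w' → F.Compatible v' w') :
    F.Compatible v w := by
  rintro s - _ hv _ hw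
  cases hv with
  | nil => cases hw; exact hout
  | cons hy hr =>
    cases hw with
    | cons hy' hr' => exact hstep _ _ _ hy hy' _ ⟨⟨_, hr⟩, ⟨_, hr'⟩⟩ _ hr _ hr'

theorem Deterministic.reaches_unique_s12 (hF : F.Deterministic) {v u u' : V} {s : List Y}
    (hu : F.Reaches v s u) (hu' : F.Reaches v s u') : u = u' := by
  induction hu with
  | nil => cases hu'; rfl
  | @cons v w u y s hy _ ih =>
    cases hu' with
    | @cons _ w' _ _ _ hy' hr' =>
      obtain rfl : w = w' := by
        by_contra hne
        exact (hF.2 v w w' hne).subset ⟨hy, hy'⟩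
      exact ih hr'

theorem Deterministic.compatible_refl (hF : F.Deterministic) (v : V) : F.Compatible v v :=
  fun _ _ _ hv' _ hv'' => congrArg F.out (hF.reaches_unique_s12 hv' hv'')

theorem Deterministic.mutuallyCompatible_singleton (hF : F.Deterministic) (v : V) :
    F.MutuallyCompatible {v} := by
  rintro _ rfl _ rfl
  exact hF.compatible_refl _

theorem Deterministic.mutuallyCompatible_pair (hF : F.Deterministic) {v w : V}
    (h : F.Compatible v w) : F.MutuallyCompatible {v, w} := by
  rintro _ (rfl | rfl) _ (rfl | rfl)
  exacts [hF.compatible_refl _, h, h.symm, hF.compatible_refl _]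

theorem MutuallyCompatible.biInter_out_nonempty {U : Set V} (hU : F.MutuallyCompatible U) :
    (⋂ v ∈ U, F.out v).Nonempty := by
  rcases U.eq_empty_or_nonempty with rfl | ⟨v, hv⟩
  · obtain ⟨v, -⟩ := F.init_nonempty
    obtain ⟨c, -⟩ := F.out_nonempty v
    exact ⟨c, by simp⟩
  · obtain ⟨c, hc⟩ := F.out_nonempty v
    exact ⟨c, Set.mem_iInter₂.mpr fun w hw => (hU v hv w hw).out_eq ▸ hc⟩

def mergeCliqueCover (F : PFilter V Y C) (K : Set (Set V)) (hK : F.IsCliqueCover K) :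
    PFilter {S // S ∈ K} Y C where
  init := {S | ∃ v ∈ F.init, v ∈ S.1}
  init_nonempty := by
    obtain ⟨v, hv⟩ := F.init_nonempty
    obtain ⟨S, hS, hvS⟩ := Set.mem_sUnion.mp (hK.2 ▸ Set.mem_univ v)
    exact ⟨⟨S, hS⟩, v, hv, hvS⟩
  tr S T := ⋃ v ∈ S.1, ⋃ w ∈ T.1, F.tr v w
  out S := ⋂ v ∈ S.1, F.out v
  out_nonempty S := (hK.1 S.1 S.2).biInter_out_nonempty

theorem isMergedFilter_mergeCliqueCover {K : Set (Set V)} (hK : F.IsCliqueCover K) :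
    F.IsMergedFilter K (F.mergeCliqueCover K hK) :=
  ⟨rfl, fun _ => rfl, fun _ _ => rfl⟩

section IsMergedFilter

variable {K : Set (Set V)} {F' : PFilter {S // S ∈ K} Y C}

theorem IsMergedFilter.mem_init (hM : F.IsMergedFilter K F') {v : V} {S : {S // S ∈ K}}
    (hv : v ∈ F.init) (hvS : v ∈ S.1) : S ∈ F'.init :=
  hM.1 ▸ ⟨v, hv, hvS⟩

theorem IsMergedFilter.mem_tr (hM : F.IsMergedFilter K F') {v w : V} {S T : {S // S ∈ K}}
    {y : Y} (hy : y ∈ F.tr v w) (hvS : v ∈ S.1) (hwT : w ∈ T.1) : y ∈ F'.tr S T :=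
  hM.2.2 S T ▸ Set.mem_biUnion hvS (Set.mem_biUnion hwT hy)

theorem IsMergedFilter.not_deterministic (hM : F.IsMergedFilter K F') {S T T' : {S // S ∈ K}}
    (hTT' : T ≠ T') {v v' w w' : V} {y : Y} (hv : v ∈ S.1) (hv' : v' ∈ S.1) (hw : w ∈ T.1)
    (hw' : w' ∈ T'.1) (hy : y ∈ F.tr v w) (hy' : y ∈ F.tr v' w') : ¬ F'.Deterministic :=
  fun hF' => (hF'.2 S T T' hTT').subset ⟨hM.mem_tr hy hv hw, hM.mem_tr hy' hv' hw'⟩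

end IsMergedFilter

theorem not_outputSimulates_of_mem_outputs {V' : Type} {F' : PFilter V' Y C} {s : List Y}
    {c : C} (hs : s ∈ F.language) (hc' : c ∈ F'.outputs s) (hc : c ∉ F.outputs s) :
    ¬ F'.OutputSimulates F :=
  fun hsim => hc ((hsim s hs).2 hc')

def ofStep (v₀ : V) (δ : V → Y → Option V) (c : V → C) : PFilter V Y C where
  init := {v₀}
  init_nonempty := Set.singleton_nonempty v₀
  tr v w := {y | δ v y = some w}
  out v := {c v}
  out_nonempty v := Set.singleton_nonempty (c v)

section ofStep

variable (v₀ : V) (δ : V → Y → Option V) (c : V → C)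

theorem deterministic_ofStep : (ofStep v₀ δ c).Deterministic :=
  ⟨⟨v₀, rfl⟩, fun _ _ _ hne => Set.eq_empty_of_forall_notMem fun _ ⟨hw, hw'⟩ =>
    hne (Option.some.inj (hw.symm.trans hw'))⟩

theorem singleOutputting_ofStep : (ofStep v₀ δ c).SingleOutputting :=
  fun v => ⟨c v, rfl⟩

theorem reaches_ofStep_iff {v u : V} {s : List Y} :
    (ofStep v₀ δ c).Reaches v s u ↔ s.foldlM δ v = some u := by
  induction s generalizing v with
  | nil =>
    constructor
    · rintro ⟨⟩; rfl
    · rintro ⟨⟩; exact .nil _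
  | cons y s ih =>
    simp only [List.foldlM_cons, Option.bind_eq_bind, Option.bind_eq_some_iff]
    constructor
    · rintro (_ | ⟨hy, hr⟩)
      exact ⟨_, hy, ih.mp hr⟩
    · rintro ⟨w, hy, hr⟩
      exact .cons hy (ih.mpr hr)

variable {v₀ δ c}

theorem mem_language_ofStep {s : List Y} {u : V} (h : s.foldlM δ v₀ = some u) :
    s ∈ (ofStep v₀ δ c).language :=
  ⟨v₀, rfl, u, (reaches_ofStep_iff v₀ δ c).mpr h⟩

theorem outputs_ofStep {s : List Y} {u : V} (h : s.foldlM δ v₀ = some u) :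
    (ofStep v₀ δ c).outputs s = {c u} := by
  have hreached : (ofStep v₀ δ c).reached s = {u} := by
    ext u'
    simp only [reached, Set.mem_ofPred_eq, reaches_ofStep_iff, Set.mem_singleton_iff]
    constructor
    · rintro ⟨_, rfl, hu'⟩
      exact Option.some.inj (hu'.symm.trans h)
    · rintro rfl
      exact ⟨v₀, rfl, h⟩
  simp only [outputs, hreached, Set.mem_singleton_iff, Set.iUnion_iUnion_eq_left]
  rfl

end ofStep

end PFilter

namespace MergeCounterexample

open PFilter

def δ : Fin 7 → Fin 2 → Option (Fin 7)
  | 0, 0 => some 2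
  | 1, 0 => some 3
  | 2, 1 => some 5
  | 4, 1 => some 6
  | _, _ => none

def F : PFilter (Fin 7) (Fin 2) (Fin 2) :=
  ofStep 0 δ fun v => if v = 6 then 1 else 0

def K : Set (Set (Fin 7)) := {{0, 1}, {3, 4}, {2}, {5}, {6}}

theorem deterministic_F : F.Deterministic :=
  deterministic_ofStep _ _ _

theorem compatible_of_step_eq_none {v w : Fin 7} (hv : ∀ y, δ v y = none)
    (hout : F.out v = F.out w) : F.Compatible v w :=
  compatible_of_forall_tr hout fun y _ _ (hy : δ v y = some _) _ => by simp [hv] at hy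

theorem compatible_3_4 : F.Compatible 3 4 :=
  compatible_of_step_eq_none (v := 3) (by decide) rfl

theorem compatible_0_1 : F.Compatible 0 1 :=
  compatible_of_forall_tr rfl fun y v w (hv : δ 0 y = some v) (hw : δ 1 y = some w) => by
    fin_cases y
    · obtain rfl : v = 2 := (Option.some.inj hv).symm
      obtain rfl : w = 3 := (Option.some.inj hw).symm
      exact (compatible_of_step_eq_none (v := 3) (w := 2) (by decide) rfl).symm
    · simp [δ] at hv

theorem isCliqueCover_K : F.IsCliqueCover K := by
  refine ⟨?_, Set.eq_univ_of_forall fun v => ?_⟩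
  · rintro S (rfl | rfl | rfl | rfl | rfl)
    exacts [deterministic_F.mutuallyCompatible_pair compatible_0_1,
      deterministic_F.mutuallyCompatible_pair compatible_3_4,
      deterministic_F.mutuallyCompatible_singleton 2,
      deterministic_F.mutuallyCompatible_singleton 5,
      deterministic_F.mutuallyCompatible_singleton 6]
  · fin_cases v <;> simp [K]

def F' : PFilter {S // S ∈ K} (Fin 2) (Fin 2) :=
  F.mergeCliqueCover K isCliqueCover_K

theorem isMergedFilter_F' : F.IsMergedFilter K F' :=
  isMergedFilter_mergeCliqueCover isCliqueCover_K

def clique01 : {S // S ∈ K} := ⟨{0, 1}, by simp [K]⟩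

def clique2 : {S // S ∈ K} := ⟨{2}, by simp [K]⟩

def clique34 : {S // S ∈ K} := ⟨{3, 4}, by simp [K]⟩

def clique6 : {S // S ∈ K} := ⟨{6}, by simp [K]⟩

theorem clique2_ne_clique34 : clique2 ≠ clique34 :=
  fun h => by simpa [clique2, clique34] using congrArg ((2 : Fin 7) ∈ ·.1) h

theorem not_deterministic_F' : ¬ F'.Deterministic :=
  isMergedFilter_F'.not_deterministic (S := clique01) clique2_ne_clique34 (v := 0) (v' := 1)
    (y := 0) (by simp [clique01]) (by simp [clique01]) (by simp [clique2]) (by simp [clique34]) rfl rfl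

theorem not_outputSimulates_F' : ¬ F'.OutputSimulates F := by
  have hrun : [0, 1].foldlM δ 0 = some 5 := rfl
  refine not_outputSimulates_of_mem_outputs (mem_language_ofStep hrun) (c := 1) ?_
    (by simp [F, outputs_ofStep hrun])
  have hreach : F'.Reaches clique01 [0, 1] clique6 :=
    .cons (isMergedFilter_F'.mem_tr (v := 1) (w := 3) (T := clique34) rfl
        (by simp [clique01]) (by simp [clique34]))
      (.cons (isMergedFilter_F'.mem_tr (v := 4) (w := 6) rfl
        (by simp [clique34]) (by simp [clique6])) (.nil _))
  refine Set.mem_biUnion ⟨_, isMergedFilter_F'.mem_init rfl (by simp [clique01]), hreach⟩ ?_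
  simp [isMergedFilter_F'.2.1, clique6, F, ofStep]

end MergeCounterexample

/-- Merging compatible states need not preserve determinism or
output simulation. -/
theorem merging_may_break_determinism :
    ∃ (V Y C : Type) (_ : Finite V) (F : PFilter V Y C) (K : Set (Set V))
      (F' : PFilter {S // S ∈ K} Y C),
      F.Deterministic ∧ F.SingleOutputting ∧ PFilter.IsCliqueCover F K ∧
      PFilter.IsMergedFilter F K F' ∧
      ¬ F'.Deterministic ∧ ¬ F'.OutputSimulates F :=
  open MergeCounterexample in
  ⟨Fin 7, Fin 2, Fin 2, inferInstance, F, K, F', deterministic_F,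
    PFilter.singleOutputting_ofStep _ _ _, isCliqueCover_K, isMergedFilter_F',
    not_deterministic_F', not_outputSimulates_F'⟩
end
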